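/- Two-dimensional universality of split coequalizers of functors: suppose (f, g, h, s, t) is a split coequalizer of functors X ⇉ Y → Z (so h∘f = h∘g, h∘s = 1_Z, s∘h = g∘t, f∘t = 1_Y as functors). Let p, q : Y → W be functors with p∘f = p∘g and q∘f = q∘g, and let p̃ = p∘s, q̃ = q∘s be the induced factorizations through h. Then whiskering with h and with s give mutually inverse bijections between natural transformations α̃ : p̃ → q̃ and natural transformations α : p → q satisfying α ▷ f = α ▷ g (whiskering of α with f and g agree). Moreover α̃ is a natural isomorphism if and only if the corresponding α is. -/

import Mathlib

/-!
Equalities of functors are used as heterogeneous equalities, along which whiskerings can be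
transported. Since `s ⋙ h = 𝟭 Z`, whiskering with `s` undoes whiskering with `h`; conversely,
if `α ▷ f ≍ α ▷ g`, then `(α ▷ s) ▷ h = α ▷ (t ⋙ g) ≍ α ▷ (t ⋙ f) = α`. Since `f ⋙ h = g ⋙ h`,
every `β ▷ h` has equal whiskerings with `f` and `g`, and invertibility transfers because both
maps of the bijection are whiskerings.
-/

open CategoryTheory

namespace CategoryTheory

theorem comp_eqToHom_eq_eqToHom_comp_iff_heq {C : Type*} [Category C] {W X Y Z : C}
    (f : W ⟶ X) (g : Y ⟶ Z) (h : W = Y) (h' : X = Z) :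
    f ≫ eqToHom h' = eqToHom h ≫ g ↔ f ≍ g := by
  cases h; cases h'; simp

namespace Functor

variable {A B C : Type*} [Category A] [Category B] [Category C]

theorem whiskerLeft_hcongr {F G : A ⥤ B} {P Q P' Q' : B ⥤ C} {α : P ⟶ Q} {β : P' ⟶ Q'}
    (hFG : F = G) (hP : P = P') (hQ : Q = Q') (hαβ : α ≍ β) :
    whiskerLeft F α ≍ whiskerLeft G β := by
  subst hFG hP hQ hαβ; rfl

theorem whiskerLeft_heq_of_eq {F G : A ⥤ B} (hFG : F = G) {P Q : B ⥤ C} (α : P ⟶ Q) :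
    whiskerLeft F α ≍ whiskerLeft G α :=
  whiskerLeft_hcongr hFG rfl rfl .rfl

variable {X Y Z W : Type*} [Category X] [Category Y] [Category Z] [Category W]
  {f g : X ⥤ Y} {h : Y ⥤ Z} {s : Z ⥤ Y} {t : Y ⥤ X} {p q : Y ⥤ W} {P Q : Z ⥤ W}

theorem whiskerLeft_heq_whiskerLeft_of_heq_whiskerLeft (h1 : f ⋙ h = g ⋙ h)
    (ep : p = h ⋙ P) (eq : q = h ⋙ Q) {γ : p ⟶ q} {β : P ⟶ Q} (hγ : γ ≍ whiskerLeft h β) :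
    whiskerLeft f γ ≍ whiskerLeft g γ :=
  (whiskerLeft_hcongr rfl ep eq hγ).trans <|
    (whiskerLeft_heq_of_eq h1 β).trans (whiskerLeft_hcongr rfl ep eq hγ).symm

theorem whiskerLeft_heq_of_heq_whiskerLeft (h2 : s ⋙ h = 𝟭 Z)
    (ep : p = h ⋙ P) (eq : q = h ⋙ Q) {γ : p ⟶ q} {β : P ⟶ Q} (hγ : γ ≍ whiskerLeft h β) :
    whiskerLeft s γ ≍ β :=
  (whiskerLeft_hcongr rfl ep eq hγ).trans (whiskerLeft_heq_of_eq h2 β)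

theorem whiskerLeft_whiskerLeft_heq_self (h3 : h ⋙ s = t ⋙ g) (h4 : t ⋙ f = 𝟭 Y)
    (hp : f ⋙ p = g ⋙ p) (hq : f ⋙ q = g ⋙ q) {α : p ⟶ q}
    (hα : whiskerLeft f α ≍ whiskerLeft g α) :
    whiskerLeft h (whiskerLeft s α) ≍ α :=
  (whiskerLeft_heq_of_eq h3 α).trans <|
    (whiskerLeft_hcongr rfl hp.symm hq.symm hα.symm).trans (whiskerLeft_heq_of_eq h4 α)

end Functor

end CategoryTheory

/-- Two-dimensional universality of split coequalizers of functors: whiskering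
with `h` and with `s` give mutually inverse bijections between natural
transformations `p̃ → q̃` (where `p̃ = s ⋙ p`, `q̃ = s ⋙ q`) and natural
transformations `α : p → q` whose whiskerings with `f` and `g` agree; moreover
these bijections preserve and reflect invertibility. -/
theorem split_coequalizer_two_dimensional {X Y Z W : Type*}
    [Category X] [Category Y] [Category Z] [Category W]
    (f g : X ⥤ Y) (h : Y ⥤ Z) (s : Z ⥤ Y) (t : Y ⥤ X)
    (h1 : f ⋙ h = g ⋙ h) (h2 : s ⋙ h = 𝟭 Z) (h3 : h ⋙ s = t ⋙ g) (h4 : t ⋙ f = 𝟭 Y)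
    (p q : Y ⥤ W) (hp : f ⋙ p = g ⋙ p) (hq : f ⋙ q = g ⋙ q) :
    ∀ (ep : h ⋙ (s ⋙ p) = p) (eq' : h ⋙ (s ⋙ q) = q),
      ∃ e : {α : p ⟶ q // Functor.whiskerLeft f α ≫ eqToHom hq = eqToHom hp ≫ Functor.whiskerLeft g α} ≃
            ((s ⋙ p) ⟶ (s ⋙ q)),
        (∀ α, e α = Functor.whiskerLeft s α.1) ∧
        (∀ αt : (s ⋙ p) ⟶ (s ⋙ q),
          (e.symm αt).1 = eqToHom ep.symm ≫ Functor.whiskerLeft h αt ≫ eqToHom eq') ∧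
        (∀ α, IsIso α.1 ↔ IsIso (e α)) := by
  intro ep eq'
  have descend_heq (αt : s ⋙ p ⟶ s ⋙ q) :
      eqToHom ep.symm ≫ Functor.whiskerLeft h αt ≫ eqToHom eq' ≍ Functor.whiskerLeft h αt := by
    simp
  have retract {α : p ⟶ q}
      (hα : Functor.whiskerLeft f α ≫ eqToHom hq = eqToHom hp ≫ Functor.whiskerLeft g α) :
      eqToHom ep.symm ≫ Functor.whiskerLeft h (Functor.whiskerLeft s α) ≫ eqToHom eq' = α :=
    eq_of_heq <| (descend_heq _).trans <| Functor.whiskerLeft_whiskerLeft_heq_self h3 h4 hp hq <|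
      (comp_eqToHom_eq_eqToHom_comp_iff_heq _ _ _ _).1 hα
  refine ⟨{ toFun α := Functor.whiskerLeft s α.1
            invFun αt := ⟨eqToHom ep.symm ≫ Functor.whiskerLeft h αt ≫ eqToHom eq',
              (comp_eqToHom_eq_eqToHom_comp_iff_heq _ _ _ _).2 <|
                Functor.whiskerLeft_heq_whiskerLeft_of_heq_whiskerLeft h1 ep.symm eq'.symm
                  (descend_heq αt)⟩
            left_inv α := Subtype.ext (retract α.2)
            right_inv αt := eq_of_heq <|
              Functor.whiskerLeft_heq_of_heq_whiskerLeft h2 ep.symm eq'.symm (descend_heq αt) },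
    fun _ => rfl, fun _ => rfl, fun α => ⟨fun _ => Functor.isIso_whiskerLeft s α.1,
      fun (_ : IsIso (Functor.whiskerLeft s α.1)) => ?_⟩⟩
  rw [← retract α.2]
  infer_instance
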